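/- Let μ be a probability measure on ℝ with finite first absolute moment m = ∫|x| dμ(x) < ∞, let ψ₁ be a real number with |ψ₁| < 1, and let g : ℝ → ℝ be bounded: |g(y)| ≤ B for all y. Then for every λ with |ψ₁| < λ < 1 there exist δ ≥ 0 and c ≥ 0 such that for every real y, ∫ |ψ₁ y + g(y) + x| dμ(x) ≤ λ·|y| + δ·1_{[−c,c]}(y), where 1_{[−c,c]} is the indicator function of the interval [−c, c]. That is, the one-step expected value of the test function T(y) = |y| under the ARNN(1,k) transition kernel satisfies the geometric drift condition toward the compact test set {y : |y| ≤ c}. -/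
import Mathlib


open MeasureTheory Set

/-- Geometric drift condition for the ARNN(1,k) transition kernel: if the
noise distribution `μ` has finite first absolute moment, `|ψ₁| < 1`, and `g` is bounded,
then for every `λ` with `|ψ₁| < λ < 1` there are `δ, c ≥ 0` such that
`∫ |ψ₁·y + g(y) + x| dμ(x) ≤ λ·|y| + δ·1_{[−c,c]}(y)` for every `y`. -/
theorem arnn_drift_condition (μ : Measure ℝ) [IsProbabilityMeasure μ]
    (hmom : Integrable (fun x : ℝ => |x|) μ)
    (ψ₁ : ℝ) (hψ : |ψ₁| < 1)
    (g : ℝ → ℝ) (B : ℝ) (hg : ∀ y : ℝ, |g y| ≤ B) :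
    ∀ lam : ℝ, |ψ₁| < lam → lam < 1 →
      ∃ δ : ℝ, 0 ≤ δ ∧ ∃ c : ℝ, 0 ≤ c ∧
        ∀ y : ℝ, (∫ x, |ψ₁ * y + g y + x| ∂μ) ≤
          lam * |y| + δ * Set.indicator (Set.Icc (-c) c) (fun _ => (1 : ℝ)) y := by
  intro lam hlam1 hlam2
  set m : ℝ := ∫ x, |x| ∂μ with hm
  have hm0 : 0 ≤ m := integral_nonneg fun x => abs_nonneg x
  have hB0 : 0 ≤ B := le_trans (abs_nonneg _) (hg 0)
  have hid : Integrable (fun x : ℝ => x) μ :=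
    (integrable_norm_iff measurable_id.aestronglyMeasurable).mp
      (by simpa [Real.norm_eq_abs] using hmom)
  -- main pointwise bound: ∫ |a + x| dμ ≤ |a| + m
  have key : ∀ a : ℝ, (∫ x, |a + x| ∂μ) ≤ |a| + m := by
    intro a
    have h1 : Integrable (fun x : ℝ => |a + x|) μ := ((integrable_const a).add hid).abs
    have h2 : Integrable (fun x : ℝ => |a| + |x|) μ := (integrable_const _).add hmom
    have h3 : (∫ x, |a + x| ∂μ) ≤ ∫ x, |a| + |x| ∂μ :=
      integral_mono h1 h2 fun x => abs_add_le a x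
    have h4 : (∫ x, |a| + |x| ∂μ) = |a| + m := by
      rw [integral_add (integrable_const _) hmom, integral_const]
      simp [hm]
    linarith
  have hgap : 0 < lam - |ψ₁| := by linarith
  refine ⟨B + m, by linarith, (B + m) / (lam - |ψ₁|), by positivity, fun y => ?_⟩
  have hbound : (∫ x, |ψ₁ * y + g y + x| ∂μ) ≤ |ψ₁| * |y| + B + m := by
    calc (∫ x, |ψ₁ * y + g y + x| ∂μ) ≤ |ψ₁ * y + g y| + m := key _
      _ ≤ |ψ₁ * y| + |g y| + m := by linarith [abs_add_le (ψ₁ * y) (g y)]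
      _ ≤ |ψ₁| * |y| + B + m := by rw [abs_mul]; linarith [hg y]
  by_cases hy : y ∈ Set.Icc (-((B + m) / (lam - |ψ₁|))) ((B + m) / (lam - |ψ₁|))
  · rw [Set.indicator_of_mem hy]
    have : |ψ₁| * |y| ≤ lam * |y| := by
      apply mul_le_mul_of_nonneg_right (le_of_lt hlam1) (abs_nonneg y)
    linarith
  · rw [Set.indicator_of_notMem hy]
    have hyabs : (B + m) / (lam - |ψ₁|) < |y| := by
      rcases abs_cases y with ⟨h, _⟩ | ⟨h, _⟩
      · rw [h]
        by_contra hc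
        push_neg at hc
        exact hy ⟨by linarith [abs_nonneg y, h ▸ (neg_abs_le y)], by linarith⟩
      · rw [h]
        by_contra hc
        push_neg at hc
        exact hy ⟨by linarith, by nlinarith [abs_nonneg y]⟩
    have : B + m ≤ (lam - |ψ₁|) * |y| := by
      rw [div_lt_iff₀ hgap] at hyabs
      nlinarith
    nlinarith [abs_nonneg y]
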